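/- Let Ω ⊆ ℝ^{m-1} be an open bounded convex set with 0 ∈ Ω, and let γ be its Minkowski gauge γ(x') = inf{ t > 0 : x'/t ∈ Ω }. Define Ψ : Ω̄ × [0,1] → ∂_⊔(Ω̄ × [0,1]) by Ψ(x', x_m) = (2x'/(2 - x_m), 0) if γ(x') ≤ 1 - x_m/2, and Ψ(x', x_m) = (x'/γ(x'), 2 - (2 - x_m)/γ(x')) otherwise, where ∂_⊔(Ω̄ × [0,1]) := (Ω̄ × {0}) ∪ (∂Ω × [0,1]). Then Ψ is well-defined, continuous, and restricts to the identity on ∂_⊔(Ω̄ × [0,1]). -/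

import Mathlib

/-!
On the cylinder `Ω̄ × [0,1]`, `Ψ` is the projection from the point `(0, 2)`: the ray through
`(x', x_m)` is followed until it leaves the cylinder, either through the bottom `Ω̄ × {0}` (first
branch, where the ray meets height `0` at `2x'/(2 - x_m)`) or through the side `∂Ω × [0,1]` (second
branch, where it meets `γ = 1`). Since `γ` is continuous and positively homogeneous, both branches
are continuous and they agree on the interface `γ(x') = 1 - x_m/2`; on the enclosing boundary the
ray leaves at its starting point.
-/

open Set

/-- The descending retraction of the cylinder `Ω̄ × [0,1]` onto its enclosing boundary,
defined via the Minkowski gauge of `Ω`. -/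
noncomputable def psiMap {m : ℕ} (Ω : Set (EuclideanSpace ℝ (Fin (m-1))))
    (p : EuclideanSpace ℝ (Fin (m-1)) × ℝ) : EuclideanSpace ℝ (Fin (m-1)) × ℝ :=
  if gauge Ω p.1 ≤ 1 - p.2 / 2 then ((2 / (2 - p.2)) • p.1, 0)
  else ((gauge Ω p.1)⁻¹ • p.1, 2 - (2 - p.2) / gauge Ω p.1)

open Topology

section GaugeRetraction

variable {E : Type*} [AddCommGroup E] [Module ℝ E] {s : Set E}

noncomputable def gaugeRetraction (s : Set E) (p : E × ℝ) : E × ℝ :=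
  if gauge s p.1 ≤ 1 - p.2 / 2 then ((2 / (2 - p.2)) • p.1, 0)
  else ((gauge s p.1)⁻¹ • p.1, 2 - (2 - p.2) / gauge s p.1)

theorem gaugeRetraction_of_gauge_le {x : E} {t : ℝ} (h : gauge s x ≤ 1 - t / 2) :
    gaugeRetraction s (x, t) = ((2 / (2 - t)) • x, 0) :=
  if_pos h

theorem gaugeRetraction_of_lt_gauge {x : E} {t : ℝ} (h : 1 - t / 2 < gauge s x) :
    gaugeRetraction s (x, t) = ((gauge s x)⁻¹ • x, 2 - (2 - t) / gauge s x) :=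
  if_neg h.not_ge

theorem gauge_smul_two_div_le_one {x : E} {t : ℝ} (ht : t < 2) (h : gauge s x ≤ 1 - t / 2) :
    gauge s ((2 / (2 - t)) • x) ≤ 1 := by
  have h2t : 0 < 2 - t := by linarith
  rw [gauge_smul_of_nonneg (by positivity), smul_eq_mul, div_mul_eq_mul_div, div_le_one h2t]
  linarith

theorem gauge_inv_smul_self {x : E} (hx : gauge s x ≠ 0) : gauge s ((gauge s x)⁻¹ • x) = 1 := by
  rw [gauge_smul_of_nonneg (inv_nonneg.2 (gauge_nonneg x)), smul_eq_mul, inv_mul_cancel₀ hx]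

theorem two_sub_div_mem_Icc {g t : ℝ} (ht : t ∈ Icc (0 : ℝ) 1) (hg : g ≤ 1)
    (h : 1 - t / 2 < g) : 2 - (2 - t) / g ∈ Icc (0 : ℝ) 1 := by
  obtain ⟨ht₀, ht₁⟩ := ht
  have hg₀ : 0 < g := by linarith
  constructor
  · rw [sub_nonneg, div_le_iff₀ hg₀]
    linarith
  · rw [sub_le_comm, le_div_iff₀ hg₀]
    nlinarith

variable [TopologicalSpace E] [ContinuousSMul ℝ E]

theorem continuousOn_gaugeRetraction (hg : Continuous (gauge s)) :
    ContinuousOn (gaugeRetraction s) {p | p.2 < 2} := by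
  have hγ : Continuous fun p : E × ℝ => gauge s p.1 := hg.comp continuous_fst
  have hlevel : Continuous fun p : E × ℝ => 1 - p.2 / 2 := by fun_prop
  refine ContinuousOn.if ?_ ?_ ?_
  · rintro ⟨x, t⟩ ⟨ht, hfr⟩
    have heq : gauge s x = 1 - t / 2 := frontier_le_subset_eq hγ hlevel hfr
    have h2t : 2 - t ≠ 0 := (sub_pos.2 ht).ne'
    have hinv : (gauge s x)⁻¹ = 2 / (2 - t) := by
      rw [heq]; field_simp
    have hheight : 2 - (2 - t) / gauge s x = 0 := by
      rw [heq]; field_simp; ring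
    simp only [hinv, hheight]
  · refine ContinuousOn.prodMk (ContinuousOn.smul ?_ continuousOn_fst) continuousOn_const
    exact continuousOn_const.div (by fun_prop) fun p hp => (sub_pos.2 hp.1).ne'
  · have hγ₀ : ∀ p ∈ {p : E × ℝ | p.2 < 2} ∩ closure {p | ¬gauge s p.1 ≤ 1 - p.2 / 2},
        gauge s p.1 ≠ 0 := by
      rintro p ⟨ht, hp⟩
      simp only [not_le] at hp
      have hle : 1 - p.2 / 2 ≤ gauge s p.1 := closure_lt_subset_le hlevel hγ hp
      have : p.2 < 2 := ht
      linarith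
    refine ((hγ.continuousOn.inv₀ hγ₀).smul continuousOn_fst).prodMk
      (continuousOn_const.sub (ContinuousOn.div ?_ hγ.continuousOn hγ₀))
    fun_prop

variable [IsTopologicalAddGroup E]

theorem gaugeRetraction_mapsTo (hs : Convex ℝ s) (hs₀ : s ∈ 𝓝 0) :
    MapsTo (gaugeRetraction s) (closure s ×ˢ Icc 0 1)
      (closure s ×ˢ {0} ∪ frontier s ×ˢ Icc 0 1) := by
  rintro ⟨x, t⟩ ⟨hx, ht⟩
  have hgx : gauge s x ≤ 1 := (gauge_le_one_iff_mem_closure hs hs₀).2 hx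
  by_cases h : gauge s x ≤ 1 - t / 2
  · rw [gaugeRetraction_of_gauge_le h]
    refine Or.inl ⟨(gauge_le_one_iff_mem_closure hs hs₀).1 ?_, rfl⟩
    exact gauge_smul_two_div_le_one (by linarith [ht.2]) h
  · rw [not_le] at h
    rw [gaugeRetraction_of_lt_gauge h]
    have hg₀ : gauge s x ≠ 0 := by linarith [ht.2]
    exact Or.inr ⟨(gauge_eq_one_iff_mem_frontier hs hs₀).1 (gauge_inv_smul_self hg₀),
      two_sub_div_mem_Icc ht hgx h⟩

theorem gaugeRetraction_eqOn (hs : Convex ℝ s) (hs₀ : s ∈ 𝓝 0) :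
    EqOn (gaugeRetraction s) id (closure s ×ˢ {0} ∪ frontier s ×ˢ Icc 0 1) := by
  rintro ⟨x, t⟩ (⟨hx, rfl : t = 0⟩ | ⟨hx, ht₀, -⟩)
  · have hgx : gauge s x ≤ 1 - 0 / 2 := by
      simpa using (gauge_le_one_iff_mem_closure hs hs₀).2 hx
    rw [gaugeRetraction_of_gauge_le hgx]
    norm_num
  · have hgx : gauge s x = 1 := (gauge_eq_one_iff_mem_frontier hs hs₀).2 hx
    by_cases h : gauge s x ≤ 1 - t / 2
    · obtain rfl : t = 0 := by linarith
      rw [gaugeRetraction_of_gauge_le h]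
      norm_num
    · rw [gaugeRetraction_of_lt_gauge (not_le.1 h), hgx]
      norm_num

end GaugeRetraction

theorem psiMap_eq_gaugeRetraction {m : ℕ} (Ω : Set (EuclideanSpace ℝ (Fin (m-1)))) :
    psiMap Ω = gaugeRetraction Ω :=
  rfl

theorem stmt2_general {m : ℕ} (Ω : Set (EuclideanSpace ℝ (Fin (m-1))))
    (hopen : IsOpen Ω) (hconv : Convex ℝ Ω)
    (h0 : (0 : EuclideanSpace ℝ (Fin (m-1))) ∈ Ω) :
    Set.MapsTo (psiMap Ω) (closure Ω ×ˢ Set.Icc (0:ℝ) 1)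
        ((closure Ω ×ˢ ({0} : Set ℝ)) ∪ (frontier Ω ×ˢ Set.Icc (0:ℝ) 1)) ∧
      ContinuousOn (psiMap Ω) (closure Ω ×ˢ Set.Icc (0:ℝ) 1) ∧
      Set.EqOn (psiMap Ω) id
        ((closure Ω ×ˢ ({0} : Set ℝ)) ∪ (frontier Ω ×ˢ Set.Icc (0:ℝ) 1)) := by
  have hΩ₀ : Ω ∈ 𝓝 0 := hopen.mem_nhds h0
  have hcyl : closure Ω ×ˢ Icc (0 : ℝ) 1 ⊆ {p | p.2 < 2} := fun p hp =>
    show p.2 < 2 by linarith [hp.2.2]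
  rw [psiMap_eq_gaugeRetraction]
  exact ⟨gaugeRetraction_mapsTo hconv hΩ₀,
    (continuousOn_gaugeRetraction (continuous_gauge hconv hΩ₀)).mono hcyl,
    gaugeRetraction_eqOn hconv hΩ₀⟩

/-- `Ψ` maps the cylinder into the enclosing boundary
`∂_⊔(Ω̄ × [0,1]) = (Ω̄ × {0}) ∪ (∂Ω × [0,1])`, is continuous on the cylinder, and
restricts to the identity on the enclosing boundary. -/
theorem stmt2 {m : ℕ} (Ω : Set (EuclideanSpace ℝ (Fin (m-1))))
    (hopen : IsOpen Ω) (hbdd : Bornology.IsBounded Ω) (hconv : Convex ℝ Ω)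
    (h0 : (0 : EuclideanSpace ℝ (Fin (m-1))) ∈ Ω) :
    Set.MapsTo (psiMap Ω) (closure Ω ×ˢ Set.Icc (0:ℝ) 1)
        ((closure Ω ×ˢ ({0} : Set ℝ)) ∪ (frontier Ω ×ˢ Set.Icc (0:ℝ) 1)) ∧
      ContinuousOn (psiMap Ω) (closure Ω ×ˢ Set.Icc (0:ℝ) 1) ∧
      Set.EqOn (psiMap Ω) id
        ((closure Ω ×ˢ ({0} : Set ℝ)) ∪ (frontier Ω ×ˢ Set.Icc (0:ℝ) 1)) :=
  stmt2_general Ω hopen hconv h0
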